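/- Let 1 < M ≤ d+1 and let φ: ℝ → ℝ be increasing and convex, ψ: ℝ → ℝ be increasing with x ↦ ψ(α·φ(x)) convex for every α > 0. Consider the symmetric loss L_sym(U,V) = ½(L_c(U,V) + L_c(V,U)) where L_c(U,V) = (1/M) Σ_{i=1}^M ψ( Σ_{j≠i} φ((u_j − v_i)·u_i) ), minimized over all tuples U = (u_1,…,u_M), V = (v_1,…,v_M) of unit vectors in ℝ^d. Then every configuration with u_i = v_i for all i and ⟨u_i, u_j⟩ = −1/(M−1) for all i ≠ j attains the minimum of L_sym. -/

import Mathlib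

/-!
Write `g x = ψ ((M - 1) * φ x)`. For arbitrary unit tuples, Jensen's inequality for `φ` over the
`M - 1` negatives of each anchor, followed by Jensen's inequality for the convex function `g` over
the `M` anchors, bounds `L_c(U,V)` below by `g` at the mean of all the inner products
`(u_j - v_i)·u_i`. That mean is at least `-M/(M-1)`, because `Σ_{i,j} u_i·u_j = ‖Σ u_i‖² ≥ 0` and
`v_i·u_i ≤ 1`; as `g` is monotone, `L_c(U,V) ≥ g(-M/(M-1))`. On the regular simplex with `U = V`
every inner product equals `-M/(M-1)`, so both halves of `L_sym` attain this bound.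
-/

open scoped BigOperators RealInnerProductSpace

noncomputable section

/-- Generalised Decoupled Hyperspherical Energy Loss `L_c(U,V;φ,ψ)`: negatives come
only from the first view `U`. -/
def Lc (d M : ℕ) (φ ψ : ℝ → ℝ)
    (U V : Fin M → EuclideanSpace ℝ (Fin d)) : ℝ :=
  (1 / (M : ℝ)) * ∑ i, ψ (∑ j ∈ Finset.univ.erase i, φ ⟪U j - V i, U i⟫)

/-- Symmetrised loss `L_sym(U,V) = ½(L_c(U,V) + L_c(V,U))`. -/
def LcSym (d M : ℕ) (φ ψ : ℝ → ℝ)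
    (U V : Fin M → EuclideanSpace ℝ (Fin d)) : ℝ :=
  (Lc d M φ ψ U V + Lc d M φ ψ V U) / 2

open Finset

theorem Finset.cast_card_univ_erase {ι : Type*} [Fintype ι] [DecidableEq ι] (i : ι) :
    (#(univ.erase i) : ℝ) = Fintype.card ι - 1 := by
  rw [card_erase_of_mem (mem_univ i), card_univ, Nat.cast_pred (Fintype.card_pos_iff.mpr ⟨i⟩)]

theorem ConvexOn.card_mul_map_sum_div_card_le {ι : Type*} {f : ℝ → ℝ}
    (hf : ConvexOn ℝ Set.univ f) {s : Finset ι} (hs : s.Nonempty) (p : ι → ℝ) :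
    #s * f ((∑ i ∈ s, p i) / #s) ≤ ∑ i ∈ s, f (p i) := by
  have hcard : (0 : ℝ) < #s := by exact_mod_cast hs.card_pos
  have h := hf.map_centerMass_le (t := s) (w := fun _ => 1) (p := p)
    (fun _ _ => zero_le_one) (by simpa using hcard) (fun _ _ => Set.mem_univ _)
  simp only [centerMass, sum_const, nsmul_eq_mul, mul_one, smul_eq_mul, one_mul,
    Function.comp_apply] at h
  rw [inv_mul_eq_div, inv_mul_eq_div, le_div_iff₀ hcard] at h
  linarith

theorem neg_card_sq_le_sum_sum_erase_inner_sub {ι E : Type*} [Fintype ι] [DecidableEq ι]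
    [NormedAddCommGroup E] [InnerProductSpace ℝ E] {U V : ι → E}
    (hU : ∀ i, ‖U i‖ = 1) (hV : ∀ i, ‖V i‖ = 1) :
    -(Fintype.card ι : ℝ) ^ 2 ≤ ∑ i, ∑ j ∈ univ.erase i, ⟪U j - V i, U i⟫ := by
  rcases isEmpty_or_nonempty ι with _ | _
  · simp
  set n : ℝ := (Fintype.card ι : ℝ)
  have hrow : ∀ i, ∑ j ∈ univ.erase i, ⟪U j - V i, U i⟫
      = ⟪∑ j, U j, U i⟫ - 1 - (n - 1) * ⟪V i, U i⟫ := by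
    intro i
    rw [sum_inner, ← add_sum_erase _ _ (mem_univ i)]
    simp only [inner_sub_left, sum_sub_distrib, sum_const, nsmul_eq_mul, cast_card_univ_erase,
      real_inner_self_eq_norm_sq, hU i]
    ring
  have hgram : 0 ≤ ∑ i, ⟪∑ j, U j, U i⟫ := by
    rw [← inner_sum]
    exact real_inner_self_nonneg
  have halign : ∑ i, ⟪V i, U i⟫ ≤ n := by
    calc ∑ i, ⟪V i, U i⟫ ≤ ∑ _i : ι, (1 : ℝ) := sum_le_sum fun i _ => by
          simpa [hU i, hV i] using real_inner_le_norm (V i) (U i)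
      _ = n := by simp [n]
  have hn : 0 ≤ n - 1 := sub_nonneg.mpr (Nat.one_le_cast.mpr Fintype.card_pos)
  rw [sum_congr rfl fun i _ => hrow i]
  simp only [sum_sub_distrib, ← mul_sum, sum_const, card_univ, nsmul_eq_mul, mul_one]
  nlinarith [mul_le_mul_of_nonneg_left halign hn]

section Loss

variable {d M : ℕ} {φ ψ : ℝ → ℝ} {U V : Fin M → EuclideanSpace ℝ (Fin d)}

theorem le_Lc (hM : 1 < M) (hφmono : Monotone φ) (hφconv : ConvexOn ℝ Set.univ φ)
    (hψmono : Monotone ψ) (hg : ConvexOn ℝ Set.univ fun x => ψ (((M : ℝ) - 1) * φ x))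
    (hU : ∀ i, ‖U i‖ = 1) (hV : ∀ i, ‖V i‖ = 1) :
    ψ (((M : ℝ) - 1) * φ (-(M : ℝ) / ((M : ℝ) - 1))) ≤ Lc d M φ ψ U V := by
  have hM1 : (0 : ℝ) < M - 1 := by
    rw [sub_pos]
    exact_mod_cast hM
  have hcard (i : Fin M) : (#(univ.erase i) : ℝ) = M - 1 := by
    rw [cast_card_univ_erase, Fintype.card_fin]
  set g : ℝ → ℝ := fun x => ψ (((M : ℝ) - 1) * φ x)
  set t : Fin M → Fin M → ℝ := fun i j => ⟪U j - V i, U i⟫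
  set m : Fin M → ℝ := fun i => (∑ j ∈ univ.erase i, t i j) / (M - 1)
  have hg_mono : Monotone g := fun x y hxy =>
    hψmono (mul_le_mul_of_nonneg_left (hφmono hxy) hM1.le)
  have hrow (i : Fin M) : g (m i) ≤ ψ (∑ j ∈ univ.erase i, φ (t i j)) := by
    have hne : (univ.erase i).Nonempty := by
      rw [← card_pos, ← Nat.cast_pos (α := ℝ), hcard]
      exact hM1
    apply hψmono
    simpa only [hcard] using hφconv.card_mul_map_sum_div_card_le hne (t i)
  have hcol : (M : ℝ) * g ((∑ i, m i) / M) ≤ ∑ i, g (m i) := by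
    have : Nonempty (Fin M) := Fin.pos_iff_nonempty.mp (by omega)
    simpa using hg.card_mul_map_sum_div_card_le univ_nonempty m
  have hmean : -(M : ℝ) / (M - 1) ≤ (∑ i, m i) / M := by
    have := neg_card_sq_le_sum_sum_erase_inner_sub hU hV
    rw [Fintype.card_fin] at this
    rw [← sum_div, div_div, div_le_div_iff₀ hM1 (by positivity)]
    nlinarith
  calc ψ (((M : ℝ) - 1) * φ (-(M : ℝ) / ((M : ℝ) - 1))) ≤ g ((∑ i, m i) / M) := hg_mono hmean
    _ ≤ 1 / M * ∑ i, g (m i) := by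
      rw [one_div, le_inv_mul_iff₀ (by positivity)]
      exact hcol
    _ ≤ Lc d M φ ψ U V := mul_le_mul_of_nonneg_left (sum_le_sum fun i _ => hrow i) (by positivity)

theorem Lc_self_eq_of_inner_eq (hM : 1 < M) (hU : ∀ i, ‖U i‖ = 1)
    (hsimplex : ∀ i j, i ≠ j → ⟪U i, U j⟫ = -1 / ((M : ℝ) - 1)) :
    Lc d M φ ψ U U = ψ (((M : ℝ) - 1) * φ (-(M : ℝ) / ((M : ℝ) - 1))) := by
  have hM1 : (M : ℝ) - 1 ≠ 0 := by
    rw [sub_ne_zero]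
    exact_mod_cast hM.ne'
  have hrow (i : Fin M) :
      ∑ j ∈ univ.erase i, φ ⟪U j - U i, U i⟫ = ((M : ℝ) - 1) * φ (-(M : ℝ) / ((M : ℝ) - 1)) := by
    have hpair : ∀ j ∈ univ.erase i, ⟪U j - U i, U i⟫ = -(M : ℝ) / ((M : ℝ) - 1) := by
      intro j hj
      rw [inner_sub_left, hsimplex j i (ne_of_mem_erase hj), real_inner_self_eq_norm_sq, hU i]
      field_simp
      ring
    rw [sum_congr rfl fun j hj => by rw [hpair j hj], sum_const, nsmul_eq_mul,
      cast_card_univ_erase, Fintype.card_fin]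
  have hM0 : (M : ℝ) ≠ 0 := by positivity
  simp only [Lc, hrow, sum_const, card_univ, Fintype.card_fin, nsmul_eq_mul]
  field_simp

end Loss

theorem stmt_2_general (d M : ℕ) (hM : 1 < M)
    (φ ψ : ℝ → ℝ)
    (hφmono : Monotone φ) (hφconv : ConvexOn ℝ Set.univ φ)
    (hψmono : Monotone ψ)
    (hψφconv : ∀ α : ℝ, 0 < α → ConvexOn ℝ Set.univ (fun x => ψ (α * φ x))) :
    ∀ U V : Fin M → EuclideanSpace ℝ (Fin d),
      (∀ i, ‖U i‖ = 1) → (∀ i, ‖V i‖ = 1) →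
      (∀ i, U i = V i) →
      (∀ i j, i ≠ j → ⟪U i, U j⟫ = -1 / ((M : ℝ) - 1)) →
      ∀ U' V' : Fin M → EuclideanSpace ℝ (Fin d),
        (∀ i, ‖U' i‖ = 1) → (∀ i, ‖V' i‖ = 1) →
        LcSym d M φ ψ U V ≤ LcSym d M φ ψ U' V' := by
  intro U V hU _ hUV hsimplex U' V' hU' hV'
  obtain rfl : U = V := funext hUV
  have hg := hψφconv ((M : ℝ) - 1) (by rw [sub_pos]; exact_mod_cast hM)
  have h₁ := le_Lc hM hφmono hφconv hψmono hg hU' hV'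
  have h₂ := le_Lc hM hφmono hφconv hψmono hg hV' hU'
  rw [LcSym, LcSym, Lc_self_eq_of_inner_eq hM hU hsimplex]
  linarith

theorem stmt_2 (d M : ℕ) (hM : 1 < M) (hMd : M ≤ d + 1)
    (φ ψ : ℝ → ℝ)
    (hφmono : Monotone φ) (hφconv : ConvexOn ℝ Set.univ φ)
    (hψmono : Monotone ψ)
    (hψφconv : ∀ α : ℝ, 0 < α → ConvexOn ℝ Set.univ (fun x => ψ (α * φ x))) :
    ∀ U V : Fin M → EuclideanSpace ℝ (Fin d),
      (∀ i, ‖U i‖ = 1) → (∀ i, ‖V i‖ = 1) →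
      (∀ i, U i = V i) →
      (∀ i j, i ≠ j → ⟪U i, U j⟫ = -1 / ((M : ℝ) - 1)) →
      ∀ U' V' : Fin M → EuclideanSpace ℝ (Fin d),
        (∀ i, ‖U' i‖ = 1) → (∀ i, ‖V' i‖ = 1) →
        LcSym d M φ ψ U V ≤ LcSym d M φ ψ U' V' :=
  stmt_2_general d M hM φ ψ hφmono hφconv hψmono hψφconv
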